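/- Let U ⊆ M_3 be the real span of id, a₁ = [[0,1,0],[1,0,0],[0,0,2]], and a₂ = [[0,−i,0],[i,0,0],[0,0,0]]. Then K(0⊕0⊕1) := {u ∈ U | u ⪰ 0, u e₃ = 0} is a two-dimensional convex cone, equal to the set of nonnegative multiples of Re(z̃)(a₁ − 2·id) + Im(z̃)a₂ with |z̃| = 1 and Re(z̃) ≤ −1/2, and its two extreme rays are spanned by u_± = 2p(z_±) ⊕ 0 with z_± = −1/2 ± i√3/2 and p(z) = (1/2)[[1,z̄],[z,1]]. -/

import Mathlib

open Matrix
open scoped ComplexOrder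

/-- The matrix `a₁` of the example. -/
noncomputable def a₁ : Matrix (Fin 3) (Fin 3) ℂ := !![0, 1, 0; 1, 0, 0; 0, 0, 2]

/-- The matrix `a₂` of the example. -/
noncomputable def a₂ : Matrix (Fin 3) (Fin 3) ℂ :=
  !![0, -Complex.I, 0; Complex.I, 0, 0; 0, 0, 0]

/-- The operator system `U = span_ℝ {id, a₁, a₂} ⊆ M₃(ℂ)`. -/
noncomputable def Uspan : Submodule ℝ (Matrix (Fin 3) (Fin 3) ℂ) :=
  Submodule.span ℝ {(1 : Matrix (Fin 3) (Fin 3) ℂ), a₁, a₂}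

/-- The cone `K(0⊕0⊕1) = {u ∈ U | u ⪰ 0, u e₃ = 0}`. -/
noncomputable def coneK : Set (Matrix (Fin 3) (Fin 3) ℂ) :=
  {u | u ∈ Uspan ∧ u.PosSemidef ∧ u.mulVec ![0, 0, 1] = 0}

/-- The nonnegative ray spanned by a matrix `v`. -/
def rayOf (v : Matrix (Fin 3) (Fin 3) ℂ) : Set (Matrix (Fin 3) (Fin 3) ℂ) :=
  {m | ∃ c : ℝ, 0 ≤ c ∧ m = c • v}

/-- `R` is an extreme ray of `coneK`: a ray inside the cone such that any decomposition
within the cone of an element of `R` uses only elements of `R`. -/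
def IsExtremeRay (R : Set (Matrix (Fin 3) (Fin 3) ℂ)) : Prop :=
  R ⊆ coneK ∧ (∃ v, v ≠ 0 ∧ R = rayOf v) ∧
    ∀ a ∈ coneK, ∀ b ∈ coneK, a + b ∈ R → a ∈ R ∧ b ∈ R

noncomputable def Mat (β γ : ℝ) : Matrix (Fin 3) (Fin 3) ℂ :=
  !![(-2*β : ℝ), (β : ℂ) - γ * Complex.I, 0;
     (β : ℂ) + γ * Complex.I, (-2*β : ℝ), 0; 0, 0, 0]

lemma Mat_herm (β γ : ℝ) : (Mat β γ).IsHermitian := by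
  ext i j
  fin_cases i <;> fin_cases j <;>
    simp [Mat, Matrix.conjTranspose_apply, Matrix.vecHead, Matrix.vecTail, Complex.ext_iff]

lemma key_aux (β γ A B q s : ℝ) (hβ : β ≤ 0) (hγ : γ^2 ≤ 3*β^2)
    (hA : 0 ≤ A) (hB : 0 ≤ B) (hqs : q^2 + s^2 = A*B) :
    0 ≤ -2*β*(A+B) + 2*(β*q + γ*s) := by
  have hABn : 0 ≤ A*B := mul_nonneg hA hB
  have hP : (β*q+γ*s)^2 ≤ β^2*(A+B)^2 := by
    nlinarith [sq_nonneg (β*s-γ*q), sq_nonneg (A-B), sq_nonneg β, sq_nonneg γ,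
      mul_nonneg (sq_nonneg β) hABn]
  have hβAB : β*(A+B) ≤ 0 :=
    mul_nonpos_of_nonpos_of_nonneg hβ (by linarith)
  nlinarith [hP, hβAB]

lemma quad_aux (β γ r0 i0 r1 i1 : ℝ) (hβ : β ≤ 0) (hγ : γ^2 ≤ 3*β^2) :
    0 ≤ -2*β*(r0^2+i0^2+r1^2+i1^2) + 2*(β*(r0*r1+i0*i1) + γ*(r0*i1-r1*i0)) := by
  have := key_aux β γ (r0^2+i0^2) (r1^2+i1^2) (r0*r1+i0*i1) (r0*i1-r1*i0) hβ hγ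
    (by positivity) (by positivity) (by ring)
  linarith [this]

lemma Mat_psd {β γ : ℝ} (hβ : β ≤ 0) (hγ : γ^2 ≤ 3*β^2) : (Mat β γ).PosSemidef := by
  refine Matrix.posSemidef_iff_dotProduct_mulVec.mpr ⟨Mat_herm β γ, fun x => ?_⟩
  have hx : star x ⬝ᵥ (Mat β γ).mulVec x =
      (starRingEnd ℂ) (x 0) * ((-2*β) * x 0 + ((β : ℂ) - γ * Complex.I) * x 1) +
      (starRingEnd ℂ) (x 1) * (((β : ℂ) + γ * Complex.I) * x 0 + (-2*β) * x 1) := by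
    simp [Mat, dotProduct, Matrix.mulVec, Fin.sum_univ_three, Matrix.vecHead, Matrix.vecTail]
  rw [hx, Complex.le_def]
  obtain ⟨r0, i0, hx0⟩ : ∃ a b : ℝ, x 0 = ⟨a, b⟩ := ⟨(x 0).re, (x 0).im, rfl⟩
  obtain ⟨r1, i1, hx1⟩ : ∃ a b : ℝ, x 1 = ⟨a, b⟩ := ⟨(x 1).re, (x 1).im, rfl⟩
  rw [hx0, hx1]
  constructor
  · simp [Complex.ext_iff]
    have := quad_aux β γ r0 i0 r1 i1 hβ hγ
    nlinarith [this]
  · simp [Complex.ext_iff]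
    ring

-- extraction of constraints from PSD
lemma Mat_psd_rev {β γ : ℝ} (h : (Mat β γ).PosSemidef) : β ≤ 0 ∧ γ^2 ≤ 3*β^2 := by
  have h1 := h.dotProduct_mulVec_nonneg ![1, 0, 0]
  have h2 := h.dotProduct_mulVec_nonneg ![-((β : ℂ) - γ * Complex.I), -2*β, 0]
  have h3 := h.dotProduct_mulVec_nonneg ![-((β : ℂ) - γ * Complex.I), 1, 0]
  rw [Complex.le_def] at h1 h2 h3
  simp [Mat, dotProduct, Matrix.mulVec, Fin.sum_univ_three, Matrix.vecHead, Matrix.vecTail,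
    Complex.ext_iff] at h1 h2 h3
  -- h1 : β ≤ 0 -ish, h2 : 0 ≤ -2β(3β²-γ²)-ish, h3 : 0 ≤ ...
  constructor
  · nlinarith [h1]
  · rcases eq_or_lt_of_le (show β ≤ 0 by nlinarith [h1]) with hb | hb
    · nlinarith [h3]
    · nlinarith [h2]

lemma Mat_eq_comb (β γ : ℝ) :
    Mat β γ = (-2*β) • (1 : Matrix (Fin 3) (Fin 3) ℂ) + β • a₁ + γ • a₂ := by
  ext i j
  fin_cases i <;> fin_cases j <;>
    simp [Mat, a₁, a₂, Matrix.one_apply, Matrix.vecHead, Matrix.vecTail, Complex.ext_iff] <;> ring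

lemma mem_Uspan (u : Matrix (Fin 3) (Fin 3) ℂ) :
    u ∈ Uspan ↔ ∃ α β γ : ℝ, u = α • (1 : Matrix (Fin 3) (Fin 3) ℂ) + β • a₁ + γ • a₂ := by
  constructor
  · intro h
    rw [Uspan, show ({(1 : Matrix (Fin 3) (Fin 3) ℂ), a₁, a₂} : Set _) =
        insert (1 : Matrix (Fin 3) (Fin 3) ℂ) {a₁, a₂} from rfl,
      Submodule.mem_span_insert] at h
    obtain ⟨α, z, hz, rfl⟩ := h
    rw [Submodule.mem_span_pair] at hz
    obtain ⟨β, γ, rfl⟩ := hz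
    exact ⟨α, β, γ, by abel⟩
  · rintro ⟨α, β, γ, rfl⟩
    refine Submodule.add_mem _ (Submodule.add_mem _ ?_ ?_) ?_ <;>
      refine Submodule.smul_mem _ _ (Submodule.subset_span ?_) <;> simp [Uspan]

lemma Mat_mulVec (β γ : ℝ) : (Mat β γ).mulVec ![0, 0, 1] = 0 := by
  funext i
  fin_cases i <;>
    simp [Mat, Matrix.mulVec, dotProduct, Fin.sum_univ_three, Matrix.vecHead, Matrix.vecTail]

lemma coneK_iff (m : Matrix (Fin 3) (Fin 3) ℂ) :
    m ∈ coneK ↔ ∃ β γ : ℝ, β ≤ 0 ∧ γ^2 ≤ 3*β^2 ∧ m = Mat β γ := by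
  constructor
  · rintro ⟨hU, hpsd, hv⟩
    obtain ⟨α, β, γ, rfl⟩ := (mem_Uspan _).1 hU
    have h2 := congr_fun hv 2
    have hα : α = -2*β := by
      simp [a₁, a₂, Matrix.mulVec, dotProduct, Fin.sum_univ_three, Matrix.one_apply,
        Matrix.vecHead, Matrix.vecTail, Complex.ext_iff] at h2
      linarith [h2]
    have hm : α • (1 : Matrix (Fin 3) (Fin 3) ℂ) + β • a₁ + γ • a₂ = Mat β γ := by
      rw [Mat_eq_comb, hα]
    rw [hm] at hpsd ⊢
    obtain ⟨hβ, hγ⟩ := Mat_psd_rev hpsd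
    exact ⟨β, γ, hβ, hγ, rfl⟩
  · rintro ⟨β, γ, hβ, hγ, rfl⟩
    exact ⟨(mem_Uspan _).2 ⟨-2*β, β, γ, Mat_eq_comb β γ⟩, Mat_psd hβ hγ, Mat_mulVec β γ⟩

lemma Mat_smul (c β γ : ℝ) : c • Mat β γ = Mat (c*β) (c*γ) := by
  ext i j
  fin_cases i <;> fin_cases j <;>
    simp [Mat, Matrix.vecHead, Matrix.vecTail, Complex.ext_iff] <;> ring

lemma Mat_add (β γ β' γ' : ℝ) : Mat β γ + Mat β' γ' = Mat (β+β') (γ+γ') := by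
  ext i j
  fin_cases i <;> fin_cases j <;>
    simp [Mat, Matrix.vecHead, Matrix.vecTail, Complex.ext_iff] <;> ring

lemma Mat_inj {β γ β' γ' : ℝ} (h : Mat β γ = Mat β' γ') : β = β' ∧ γ = γ' := by
  have h0 := congr_fun (congr_fun h 1) 0
  simp [Mat, Matrix.vecHead, Matrix.vecTail, Complex.ext_iff] at h0
  exact h0

lemma Mat_ne_zero {β γ : ℝ} (h : ¬(β = 0 ∧ γ = 0)) : Mat β γ ≠ 0 := by
  intro h0
  have : Mat β γ = Mat 0 0 := by
    rw [h0]; ext i j; fin_cases i <;> fin_cases j <;>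
      simp [Mat, Matrix.vecHead, Matrix.vecTail]
  exact h (Mat_inj this)

lemma cross_aux {a b c d : ℝ} (ha : a ≤ 0) (hc : c ≤ 0)
    (h1 : b^2 ≤ 3*a^2) (h2 : d^2 ≤ 3*c^2) : b*d ≤ 3*(a*c) := by
  rcases eq_or_lt_of_le ha with ha0 | ha0
  · have hb : b = 0 := by nlinarith
    simp [hb, ha0]
  rcases eq_or_lt_of_le hc with hc0 | hc0
  · have hd : d = 0 := by nlinarith
    simp [hd, hc0]
  have hac : 0 < a*c := mul_pos_of_neg_of_neg ha0 hc0
  rw [← mul_le_mul_iff_of_pos_right hac]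
  nlinarith [sq_nonneg (b*c - a*d), sq_nonneg (b*c + a*d), mul_nonneg (sq_nonneg a) (sub_nonneg.2 h2),
    mul_nonneg (sq_nonneg c) (sub_nonneg.2 h1)]

lemma coneK_convex : Convex ℝ coneK := by
  rintro x hx y hy t s ht hs hts
  obtain ⟨β₁, γ₁, hb1, hg1, rfl⟩ := (coneK_iff x).1 hx
  obtain ⟨β₂, γ₂, hb2, hg2, rfl⟩ := (coneK_iff y).1 hy
  refine (coneK_iff _).2 ⟨t*β₁ + s*β₂, t*γ₁ + s*γ₂, ?_, ?_, ?_⟩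
  · have := mul_nonneg ht (neg_nonneg.2 hb1)
    have := mul_nonneg hs (neg_nonneg.2 hb2)
    nlinarith
  · have hcross := cross_aux hb1 hb2 hg1 hg2
    nlinarith [mul_nonneg (mul_nonneg ht ht) (sub_nonneg.2 hg1),
      mul_nonneg (mul_nonneg hs hs) (sub_nonneg.2 hg2),
      mul_nonneg (mul_nonneg ht hs) (sub_nonneg.2 hcross)]
  · rw [Mat_smul, Mat_smul, Mat_add]

lemma coneK_smul {c : ℝ} (hc : 0 ≤ c) {m : Matrix (Fin 3) (Fin 3) ℂ} (hm : m ∈ coneK) :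
    c • m ∈ coneK := by
  obtain ⟨β, γ, hb, hg, rfl⟩ := (coneK_iff m).1 hm
  refine (coneK_iff _).2 ⟨c*β, c*γ, ?_, ?_, (Mat_smul c β γ)⟩
  · exact mul_nonpos_of_nonneg_of_nonpos hc hb
  · nlinarith [mul_nonneg (mul_nonneg hc hc) (sub_nonneg.2 hg)]

lemma comb2 (x y : ℝ) :
    x • (a₁ - 2 • (1 : Matrix (Fin 3) (Fin 3) ℂ)) + y • a₂ = Mat x y := by
  rw [two_smul]
  ext i j
  fin_cases i <;> fin_cases j
  all_goals try simp [Mat, a₁, a₂, Matrix.one_apply, Matrix.vecHead, Matrix.vecTail, Complex.ext_iff]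
  all_goals try ring
  all_goals tauto

lemma Mat_zero : Mat 0 0 = 0 := by
  ext i j
  fin_cases i <;> fin_cases j <;> simp [Mat, Matrix.vecHead, Matrix.vecTail]

lemma coneK_eq_param : coneK = {m | ∃ η : ℝ, 0 ≤ η ∧ ∃ zt : ℂ, ‖zt‖ = 1 ∧
    zt.re ≤ -1/2 ∧ m = η • ((zt.re : ℝ) • (a₁ - 2 • (1 : Matrix (Fin 3) (Fin 3) ℂ)) +
      (zt.im : ℝ) • a₂)} := by
  ext m
  simp only [Set.mem_setOf_eq]
  rw [coneK_iff]
  constructor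
  · rintro ⟨β, γ, hβ, hγ, rfl⟩
    rcases eq_or_lt_of_le hβ with hb0 | hb0
    · have hγ0 : γ = 0 := by nlinarith
      refine ⟨0, le_refl 0, -1, by simp, by norm_num, ?_⟩
      rw [zero_smul, hb0, hγ0, Mat_zero]
    · set r := Real.sqrt (β^2+γ^2) with hrdef
      have hr2 : r^2 = β^2+γ^2 := Real.sq_sqrt (by positivity)
      have hr : 0 < r := Real.sqrt_pos.2 (by nlinarith)
      refine ⟨r, hr.le, ⟨β/r, γ/r⟩, ?_, ?_, ?_⟩
      · have habs : (‖(⟨β/r, γ/r⟩ : ℂ)‖)^2 = 1 := by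
          rw [Complex.sq_norm, Complex.normSq_apply]
          simp only []
          field_simp
          linarith [hr2]
        nlinarith [norm_nonneg (⟨β/r, γ/r⟩ : ℂ)]
      · have hrle : r ≤ -2*β := by nlinarith [Real.sqrt_nonneg (β^2+γ^2)]
        simp only []
        rw [div_le_iff₀ hr]
        linarith
      · simp only []
        rw [comb2, Mat_smul, mul_div_cancel₀ _ hr.ne', mul_div_cancel₀ _ hr.ne']
  · rintro ⟨η, hη, zt, habs, hre, rfl⟩
    have hsum : zt.re^2 + zt.im^2 = 1 := by
      have := Complex.sq_norm zt
      rw [habs, Complex.normSq_apply] at this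
      nlinarith [this]
    refine ⟨η * zt.re, η * zt.im, ?_, ?_, ?_⟩
    · exact mul_nonpos_of_nonneg_of_nonpos hη (by linarith)
    · have h14 : 1 ≤ 4*zt.re^2 := by nlinarith [sq_nonneg (zt.re + 1/2)]
      have hkey : η^2*zt.im^2 = η^2*(1 - zt.re^2) := by rw [show zt.im^2 = 1 - zt.re^2 by linarith]
      nlinarith [mul_nonneg (mul_nonneg hη hη) (by linarith : (0:ℝ) ≤ 4*zt.re^2 - 1), hkey]
    · rw [comb2, Mat_smul]

lemma span_coneK : Submodule.span ℝ coneK = Submodule.span ℝ (Set.range ![Mat (-1) 0, Mat 0 1]) := by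
  apply le_antisymm
  · rw [Submodule.span_le]
    rintro m hm
    obtain ⟨β, γ, _, _, rfl⟩ := (coneK_iff m).1 hm
    have : Mat β γ = (-β) • Mat (-1) 0 + γ • Mat 0 1 := by
      rw [Mat_smul, Mat_smul, Mat_add]; norm_num
    rw [this]
    refine Submodule.add_mem _ ?_ ?_ <;>
      refine Submodule.smul_mem _ _ (Submodule.subset_span ?_)
    · exact ⟨0, rfl⟩
    · exact ⟨1, rfl⟩
  · rw [Submodule.span_le]
    rintro m ⟨i, rfl⟩
    have h1 : Mat (-1) 0 ∈ coneK := (coneK_iff _).2 ⟨-1, 0, by norm_num, by norm_num, rfl⟩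
    have h2 : Mat (-1) (Real.sqrt 3) ∈ coneK := (coneK_iff _).2 ⟨-1, Real.sqrt 3, by norm_num,
      by rw [Real.sq_sqrt]; norm_num; norm_num, rfl⟩
    fin_cases i
    · exact Submodule.subset_span h1
    · show Mat 0 1 ∈ (Submodule.span ℝ coneK : Set _)
      have h3 : Mat 0 1 = (Real.sqrt 3)⁻¹ • Mat (-1) (Real.sqrt 3) + (-(Real.sqrt 3)⁻¹) • Mat (-1) 0 := by
        have h30 : Real.sqrt 3 ≠ 0 := by positivity
        rw [Mat_smul, Mat_smul, Mat_add]
        congr 1 <;> field_simp <;> norm_num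
      rw [h3]
      exact Submodule.add_mem _ (Submodule.smul_mem _ _ (Submodule.subset_span h2))
        (Submodule.smul_mem _ _ (Submodule.subset_span h1))

lemma finrank_span_coneK : Module.finrank ℝ ↥(Submodule.span ℝ coneK) = 2 := by
  rw [span_coneK]
  have hli : LinearIndependent ℝ ![Mat (-1) 0, Mat 0 1] := by
    rw [linearIndependent_fin2]
    constructor
    · show Mat 0 1 ≠ 0
      exact Mat_ne_zero (by norm_num)
    · intro a h
      rw [show (![Mat (-1) 0, Mat 0 1] 1) = Mat 0 1 from rfl,
        show (![Mat (-1) 0, Mat 0 1] 0) = Mat (-1) 0 from rfl, Mat_smul] at h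
      have := (Mat_inj h).1
      norm_num at this
  rw [finrank_span_eq_card hli]
  simp

lemma rayOf_smul {t : ℝ} (ht : 0 < t) (v : Matrix (Fin 3) (Fin 3) ℂ) :
    rayOf (t • v) = rayOf v := by
  ext m
  constructor
  · rintro ⟨c, hc, rfl⟩
    exact ⟨c * t, mul_nonneg hc ht.le, by rw [smul_smul]⟩
  · rintro ⟨c, hc, rfl⟩
    exact ⟨c / t, div_nonneg hc ht.le, by rw [smul_smul, div_mul_cancel₀ _ ht.ne']⟩

lemma extreme_boundary {β₀ γ₀ : ℝ} (hb : β₀ < 0) (hg : γ₀^2 = 3*β₀^2) :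
    IsExtremeRay (rayOf (Mat β₀ γ₀)) := by
  have hγ0 : γ₀ ≠ 0 := by intro h; rw [h] at hg; nlinarith
  refine ⟨?_, ⟨Mat β₀ γ₀, Mat_ne_zero (by intro ⟨h, _⟩; exact hb.ne h), rfl⟩, ?_⟩
  · rintro m ⟨c, hc, rfl⟩
    rw [Mat_smul]
    exact (coneK_iff _).2 ⟨c*β₀, c*γ₀, mul_nonpos_of_nonneg_of_nonpos hc hb.le,
      by nlinarith [mul_nonneg (mul_nonneg hc hc) (sq_nonneg β₀)], rfl⟩
  · rintro a ha b hbm ⟨c, hc, hab⟩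
    obtain ⟨β₁, γ₁, hb1, hg1, rfl⟩ := (coneK_iff a).1 ha
    obtain ⟨β₂, γ₂, hb2, hg2, rfl⟩ := (coneK_iff b).1 hbm
    rw [Mat_add, Mat_smul] at hab
    obtain ⟨hbsum, hgsum⟩ := Mat_inj hab
    have hc1 := cross_aux hb1 hb.le hg1 hg.le
    have hc2 := cross_aux hb2 hb.le hg2 hg.le
    -- equality in both cross inequalities
    have hsum3 : γ₁*γ₀ + γ₂*γ₀ = 3*(β₁*β₀) + 3*(β₂*β₀) := by
      have h1 : (γ₁ + γ₂)*γ₀ = c*γ₀^2 := by rw [hgsum]; ring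
      have h2 : (β₁ + β₂)*β₀ = c*β₀^2 := by rw [hbsum]; ring
      nlinarith [h1, h2, hg]
    have he1 : γ₁*γ₀ = 3*(β₁*β₀) := by linarith
    have he2 : γ₂*γ₀ = 3*(β₂*β₀) := by linarith
    have key : ∀ β γ : ℝ, β ≤ 0 → γ*γ₀ = 3*(β*β₀) → Mat β γ ∈ rayOf (Mat β₀ γ₀) := by
      intro β γ hβ he
      refine ⟨β/β₀, div_nonneg_of_nonpos hβ hb.le, ?_⟩
      rw [Mat_smul]
      have hγ : γ = β/β₀ * γ₀ := by
        have h3 : γ*γ₀^2 = 3*(β*β₀)*γ₀ := by rw [← he]; ring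
        rw [hg] at h3
        have h4 : γ*β₀ - β*γ₀ = 0 := by
          have h5 : (3:ℝ)*β₀ ≠ 0 := mul_ne_zero three_ne_zero hb.ne
          apply mul_left_cancel₀ h5
          linear_combination h3
        field_simp [hb.ne]
        linear_combination h4
      rw [div_mul_cancel₀ _ hb.ne, ← hγ]
    exact ⟨key β₁ γ₁ hb1 he1, key β₂ γ₂ hb2 he2⟩

lemma extreme_ray_eq {R : Set (Matrix (Fin 3) (Fin 3) ℂ)} (hR : IsExtremeRay R) :
    R = rayOf (Mat (-(1/2)) (Real.sqrt 3/2)) ∨ R = rayOf (Mat (-(1/2)) (-(Real.sqrt 3/2))) := by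
  have hs3 : (Real.sqrt 3)^2 = 3 := Real.sq_sqrt (by norm_num)
  have hs3pos : 0 < Real.sqrt 3 := Real.sqrt_pos.2 (by norm_num)
  set s3 := Real.sqrt 3 with hs3def
  obtain ⟨hsub, ⟨v, hv0, rfl⟩, hext⟩ := hR
  have hvR : v ∈ rayOf v := ⟨1, by norm_num, (one_smul _ _).symm⟩
  obtain ⟨β, γ, hβ, hγ, hveq⟩ := (coneK_iff v).1 (hsub hvR)
  subst hveq
  have hβ0 : β < 0 := by
    rcases eq_or_lt_of_le hβ with h0 | h0
    · exfalso
      apply hv0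
      have hγ0 : γ = 0 := by nlinarith
      rw [h0, hγ0, Mat_zero]
    · exact h0
  set s := -β + γ/s3 with hsdef
  set t := -β - γ/s3 with htdef
  clear_value s t
  have hγ2 : (γ/s3)^2 ≤ β^2 := by
    rw [div_pow, hs3]
    nlinarith
  have habs : |γ/s3| ≤ -β := by
    have h1 : |γ/s3| ≤ |β| := by
      rw [← Real.sqrt_sq_eq_abs, ← Real.sqrt_sq_eq_abs]
      exact Real.sqrt_le_sqrt hγ2
    rwa [abs_of_nonpos hβ] at h1
  have hs : 0 ≤ s := by
    have := neg_abs_le (γ/s3); rw [hsdef]; linarith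
  have ht : 0 ≤ t := by
    have := le_abs_self (γ/s3); rw [htdef]; linarith
  have hdecomp : Mat β γ = s • Mat (-(1/2)) (s3/2) + t • Mat (-(1/2)) (-(s3/2)) := by
    rw [Mat_smul, Mat_smul, Mat_add]
    have h1 : s * -(1/2) + t * -(1/2) = β := by rw [hsdef, htdef]; ring
    have h2 : s * (s3/2) + t * (-(s3/2)) = γ := by
      rw [hsdef, htdef]
      field_simp
      ring
    rw [h1, h2]
  have hupK : Mat (-(1/2)) (s3/2) ∈ coneK :=
    (coneK_iff _).2 ⟨-(1/2), s3/2, by norm_num, by nlinarith, rfl⟩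
  have humK : Mat (-(1/2)) (-(s3/2)) ∈ coneK :=
    (coneK_iff _).2 ⟨-(1/2), -(s3/2), by norm_num, by nlinarith, rfl⟩
  have hsumR : s • Mat (-(1/2)) (s3/2) + t • Mat (-(1/2)) (-(s3/2)) ∈ rayOf (Mat β γ) := by
    rw [← hdecomp]; exact hvR
  obtain ⟨hya, hyb⟩ := hext _ (coneK_smul hs hupK) _ (coneK_smul ht humK) hsumR
  rcases eq_or_lt_of_le hs with hs0 | hs0
  · -- s = 0, so v is a positive multiple of um'
    right
    have ht0 : 0 < t := by
      rcases eq_or_lt_of_le ht with ht0 | ht0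
      · exfalso; apply hβ0.ne; rw [hsdef] at hs0; rw [htdef] at ht0; linarith
      · exact ht0
    rw [hdecomp, ← hs0, zero_smul, zero_add, rayOf_smul ht0]
  · -- s > 0, so v is a positive multiple of up'
    left
    obtain ⟨c, hc, hceq⟩ := hya
    have hcne : c ≠ 0 := by
      intro h0
      rw [h0, zero_smul, Mat_smul] at hceq
      exact Mat_ne_zero (by rintro ⟨h, -⟩; nlinarith [hs0, h]) hceq
    have hmeq : Mat β γ = (c⁻¹ * s) • Mat (-(1/2)) (s3/2) := by
      rw [← smul_smul, hceq, inv_smul_smul₀ hcne]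
    rw [hmeq, rayOf_smul (by positivity)]

lemma up_eq : !![1, starRingEnd ℂ (-1/2 + (Real.sqrt 3 / 2 : ℝ) * Complex.I), 0;
    -1/2 + (Real.sqrt 3 / 2 : ℝ) * Complex.I, 1, 0; 0, 0, 0] = Mat (-(1/2)) (Real.sqrt 3/2) := by
  ext i j
  fin_cases i <;> fin_cases j <;>
    simp [Mat, Matrix.vecHead, Matrix.vecTail, Complex.ext_iff, map_ofNat, Complex.div_re, Complex.div_im, Complex.normSq] <;> norm_num

lemma um_eq : !![1, starRingEnd ℂ (-1/2 - (Real.sqrt 3 / 2 : ℝ) * Complex.I), 0;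
    -1/2 - (Real.sqrt 3 / 2 : ℝ) * Complex.I, 1, 0; 0, 0, 0] = Mat (-(1/2)) (-(Real.sqrt 3/2)) := by
  ext i j
  fin_cases i <;> fin_cases j <;>
    simp [Mat, Matrix.vecHead, Matrix.vecTail, Complex.ext_iff, map_ofNat, Complex.div_re, Complex.div_im, Complex.normSq] <;> norm_num


/-- The cone `K(0⊕0⊕1) = {u ∈ U | u ⪰ 0, u e₃ = 0}` is a convex cone
whose linear span is two-dimensional, equal to the set of nonnegative multiples of
`Re(z̃)(a₁ − 2·id) + Im(z̃)a₂` for `|z̃| = 1`, `Re(z̃) ≤ −1/2`, and its extreme rays are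
exactly the rays spanned by `up = 2p(zp) ⊕ 0` and `um = 2p(zm) ⊕ 0`, where
`z_± = −1/2 ± i√3/2` and `p(z) = ½[[1, z̄],[z, 1]]`. -/
theorem stmt19 (zp zm : ℂ)
    (hzp : zp = -1/2 + (Real.sqrt 3 / 2 : ℝ) * Complex.I)
    (hzm : zm = -1/2 - (Real.sqrt 3 / 2 : ℝ) * Complex.I)
    (up um : Matrix (Fin 3) (Fin 3) ℂ)
    (hup : up = !![1, starRingEnd ℂ zp, 0; zp, 1, 0; 0, 0, 0])
    (hum : um = !![1, starRingEnd ℂ zm, 0; zm, 1, 0; 0, 0, 0]) :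
    Convex ℝ coneK ∧ (∀ c : ℝ, 0 ≤ c → ∀ m ∈ coneK, c • m ∈ coneK) ∧
    Module.finrank ℝ ↥(Submodule.span ℝ coneK) = 2 ∧
    coneK = {m | ∃ η : ℝ, 0 ≤ η ∧ ∃ zt : ℂ, ‖zt‖ = 1 ∧ zt.re ≤ -1/2 ∧
      m = η • ((zt.re : ℝ) • (a₁ - 2 • (1 : Matrix (Fin 3) (Fin 3) ℂ)) +
        (zt.im : ℝ) • a₂)} ∧
    {R | IsExtremeRay R} = {rayOf up, rayOf um} := by
  subst hzp hzm hup hum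
  have hs3 : (Real.sqrt 3)^2 = 3 := Real.sq_sqrt (by norm_num)
  refine ⟨coneK_convex, fun c hc m hm => coneK_smul hc hm, finrank_span_coneK,
    coneK_eq_param, ?_⟩
  ext R
  simp only [Set.mem_setOf_eq, Set.mem_insert_iff, Set.mem_singleton_iff]
  rw [up_eq, um_eq]
  constructor
  · intro h
    exact extreme_ray_eq h
  · rintro (rfl | rfl)
    · exact extreme_boundary (by norm_num) (by rw [div_pow, hs3]; norm_num)
    · exact extreme_boundary (by norm_num) (by rw [neg_pow, div_pow, hs3]; norm_num)
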